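/- arXiv:1602.02700 — 9 statements merged into one kernel-verified Lean document; each statement's English description precedes it below -/
import Mathlib

section
/- Let A be a finite-dimensional real vector space, ω ∈ Λ²A* a 2-form with kernel K = {a ∈ A | ι_a ω = 0}, and B, C ⊆ A subspaces. If ω(B,C) = 0 and dim(B ∩ K ∩ C) = dim B + dim C − dim A, then B^ω = C + (B ∩ K), where B^ω = {a ∈ A | ω(a,b) = 0 for all b ∈ B}. -/
open Module LinearMap

noncomputable def pairingP (A : Type*) [AddCommGroup A] [Module ℝ A] :
    (A × Module.Dual ℝ A) →ₗ[ℝ] (A × Module.Dual ℝ A) →ₗ[ℝ] ℝ :=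
  LinearMap.mk₂ ℝ (fun x y => x.2 y.1 + y.2 x.1)
    (fun x x' y => by simp; ring)
    (fun c x y => by simp; ring)
    (fun x y y' => by simp; ring)
    (fun c x y => by simp; ring)

noncomputable def orth {A : Type*} [AddCommGroup A] [Module ℝ A]
    (E : Submodule ℝ (A × Module.Dual ℝ A)) : Submodule ℝ (A × Module.Dual ℝ A) :=
  ⨅ e ∈ E, LinearMap.ker (pairingP A e)

def IsLagrangian {A : Type*} [AddCommGroup A] [Module ℝ A]
    (E : Submodule ℝ (A × Module.Dual ℝ A)) : Prop := E = orth E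

noncomputable def omegaOrth {A : Type*} [AddCommGroup A] [Module ℝ A]
    (ω : A →ₗ[ℝ] A →ₗ[ℝ] ℝ) (B : Submodule ℝ A) : Submodule ℝ A :=
  ⨅ b ∈ B, LinearMap.ker (ω.flip b)

noncomputable def grForm {A : Type*} [AddCommGroup A] [Module ℝ A]
    (ω : A →ₗ[ℝ] A →ₗ[ℝ] ℝ) : A →ₗ[ℝ] A × Module.Dual ℝ A :=
  LinearMap.prod LinearMap.id ω

noncomputable def inlA (A : Type*) [AddCommGroup A] [Module ℝ A] :
    A →ₗ[ℝ] A × Module.Dual ℝ A := LinearMap.inl ℝ A (Module.Dual ℝ A)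

noncomputable def gaugeMap {A : Type*} [AddCommGroup A] [Module ℝ A]
    (ω : A →ₗ[ℝ] A →ₗ[ℝ] ℝ) : (A × Module.Dual ℝ A) →ₗ[ℝ] (A × Module.Dual ℝ A) :=
  LinearMap.prod (LinearMap.fst ℝ A _) (LinearMap.snd ℝ A _ + ω ∘ₗ LinearMap.fst ℝ A _)

noncomputable def tauMap {A₀ A₁ : Type*} [AddCommGroup A₀] [Module ℝ A₀]
    [AddCommGroup A₁] [Module ℝ A₁] (φ : A₀ →ₗ[ℝ] A₁) :
    (A₀ × Module.Dual ℝ A₁) →ₗ[ℝ] (A₀ × Module.Dual ℝ A₀) :=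
  LinearMap.prod (LinearMap.fst ℝ A₀ _) (φ.dualMap ∘ₗ LinearMap.snd ℝ A₀ _)

noncomputable def sigMap {A₀ A₁ : Type*} [AddCommGroup A₀] [Module ℝ A₀]
    [AddCommGroup A₁] [Module ℝ A₁] (φ : A₀ →ₗ[ℝ] A₁) :
    (A₀ × Module.Dual ℝ A₁) →ₗ[ℝ] (A₁ × Module.Dual ℝ A₁) :=
  LinearMap.prod (φ ∘ₗ LinearMap.fst ℝ A₀ _) (LinearMap.snd ℝ A₀ _)

noncomputable def pullLag {A₀ A₁ : Type*} [AddCommGroup A₀] [Module ℝ A₀]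
    [AddCommGroup A₁] [Module ℝ A₁] (φ : A₀ →ₗ[ℝ] A₁)
    (L₁ : Submodule ℝ (A₁ × Module.Dual ℝ A₁)) : Submodule ℝ (A₀ × Module.Dual ℝ A₀) :=
  Submodule.map (tauMap φ) (Submodule.comap (sigMap φ) L₁)

noncomputable def pushLag {A₀ A₁ : Type*} [AddCommGroup A₀] [Module ℝ A₀]
    [AddCommGroup A₁] [Module ℝ A₁] (φ : A₀ →ₗ[ℝ] A₁)
    (L₀ : Submodule ℝ (A₀ × Module.Dual ℝ A₀)) : Submodule ℝ (A₁ × Module.Dual ℝ A₁) :=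
  Submodule.map (sigMap φ) (Submodule.comap (tauMap φ) L₀)


theorem stmt0 {A : Type*} [AddCommGroup A] [Module ℝ A] [FiniteDimensional ℝ A]
    (ω : A →ₗ[ℝ] A →ₗ[ℝ] ℝ) (hω : ∀ a, ω a a = 0) (B C : Submodule ℝ A)
    (hBC : ∀ b ∈ B, ∀ c ∈ C, ω b c = 0)
    (hdim : Module.finrank ℝ ↥(B ⊓ LinearMap.ker ω ⊓ C) + Module.finrank ℝ A
      = Module.finrank ℝ B + Module.finrank ℝ C) :
    omegaOrth ω B = C ⊔ (B ⊓ LinearMap.ker ω) := by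
  have hanti : ∀ a b, ω a b = - ω b a := by
    intro a b
    have h := hω (a + b)
    simp only [map_add, LinearMap.add_apply, hω] at h
    linarith
  set K := LinearMap.ker ω with hK
  have hmem : ∀ a, a ∈ omegaOrth ω B ↔ ∀ b ∈ B, ω a b = 0 := by
    intro a
    simp [omegaOrth, Submodule.mem_iInf, LinearMap.mem_ker]
  -- the easy inclusion
  have hle : C ⊔ (B ⊓ K) ≤ omegaOrth ω B := by
    refine sup_le ?_ ?_
    · intro c hc
      rw [hmem]
      intro b hb
      rw [hanti]
      simp [hBC b hb c hc]
    · intro a ha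
      rw [hmem]
      intro b hb
      have : ω a = 0 := ha.2
      simp [this]
  -- flip kernel
  have hflip : LinearMap.ker ω.flip = K := by
    ext a
    constructor
    · intro h
      have : ∀ b, ω a b = 0 := by
        intro b
        have := LinearMap.congr_fun (LinearMap.mem_ker.mp h) b
        simp only [LinearMap.flip_apply, LinearMap.zero_apply] at this
        rw [hanti]; simp [this]
      exact LinearMap.mem_ker.mpr (by ext b; simp [this b])
    · intro h
      have h0 : ω a = 0 := h
      refine LinearMap.mem_ker.mpr ?_
      ext b
      simp only [LinearMap.flip_apply, LinearMap.zero_apply]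
      rw [hanti]
      simp [h0]
  -- maps
  set g : A →ₗ[ℝ] Module.Dual ℝ B := B.subtype.dualMap ∘ₗ ω with hg
  set t : B →ₗ[ℝ] Module.Dual ℝ A := ω.flip ∘ₗ B.subtype with ht
  have hker : omegaOrth ω B = LinearMap.ker g := by
    ext a
    rw [hmem, LinearMap.mem_ker]
    constructor
    · intro h
      ext b
      exact h b b.2
    · intro h b hb
      exact congr_fun (congrArg DFunLike.coe h) ⟨b, hb⟩
  -- g = t.dualMap ∘ evalEquiv
  have hcomp : g = t.dualMap ∘ₗ (Module.evalEquiv ℝ A).toLinearMap := by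
    ext a b
    simp [hg, ht, Module.evalEquiv_apply]
  have hrange : LinearMap.range g = LinearMap.range t.dualMap := by
    rw [hcomp, LinearMap.range_comp, LinearEquiv.range, Submodule.map_top]
  have e1 : Module.finrank ℝ (LinearMap.range g) + Module.finrank ℝ (LinearMap.ker g)
      = Module.finrank ℝ A := LinearMap.finrank_range_add_finrank_ker g
  have e2 : Module.finrank ℝ (LinearMap.range g) = Module.finrank ℝ (LinearMap.range t) := by
    rw [hrange, LinearMap.finrank_range_dualMap_eq_finrank_range]
  have e3 : Module.finrank ℝ (LinearMap.range t) + Module.finrank ℝ (LinearMap.ker t)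
      = Module.finrank ℝ ↥B := LinearMap.finrank_range_add_finrank_ker t
  have e4 : Module.finrank ℝ (LinearMap.ker t) = Module.finrank ℝ ↥(B ⊓ K) := by
    have hkt : LinearMap.ker t = (LinearMap.ker ω.flip).comap B.subtype := by
      rw [ht, LinearMap.ker_comp]
    rw [hkt, hflip]
    rw [← Submodule.map_comap_subtype B K]
    exact (Submodule.finrank_map_subtype_eq B _).symm
  have e5 : Module.finrank ℝ ↥(C ⊔ B ⊓ K) + Module.finrank ℝ ↥(C ⊓ (B ⊓ K))
      = Module.finrank ℝ C + Module.finrank ℝ ↥(B ⊓ K) :=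
    Submodule.finrank_sup_add_finrank_inf_eq C (B ⊓ K)
  have e6 : C ⊓ (B ⊓ K) = B ⊓ K ⊓ C := by rw [inf_comm]
  rw [e6] at e5
  have e7 : Module.finrank ℝ (omegaOrth ω B) = Module.finrank ℝ (LinearMap.ker g) := by
    rw [hker]
  refine (Submodule.eq_of_le_of_finrank_eq hle ?_).symm
  omega
end

section
/- Let A be a finite-dimensional real vector space, ω ∈ Λ²A* with kernel K, and B, C ⊆ A subspaces. Then B^ω = C + (B ∩ K) holds if and only if C^ω = B + (C ∩ K). -/
open Module LinearMap

open Submodule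

section Aux
variable {A : Type*} [AddCommGroup A] [Module ℝ A]

variable (ω : A →ₗ[ℝ] A →ₗ[ℝ] ℝ) (hω : ∀ a, ω a a = 0)

include hω in
lemma skew_aux (a b : A) : ω a b = - ω b a := by
  have h := hω (a + b)
  simp only [map_add, LinearMap.add_apply, hω] at h
  linarith

lemma mem_omegaOrth_aux {E : Submodule ℝ A} {a : A} :
    a ∈ omegaOrth ω E ↔ ∀ b ∈ E, ω a b = 0 := by
  simp [omegaOrth, Submodule.mem_iInf, LinearMap.mem_ker]

include hω

lemma omegaOrth_eq_comap (E : Submodule ℝ A) :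
    omegaOrth ω E = Submodule.comap ω E.dualAnnihilator := by
  ext a
  simp [mem_omegaOrth_aux, Submodule.mem_dualAnnihilator]

lemma omegaOrth_eq_dualCoann (E : Submodule ℝ A) :
    omegaOrth ω E = (Submodule.map ω E).dualCoannihilator := by
  ext a
  simp only [mem_omegaOrth_aux, Submodule.mem_dualCoannihilator]
  constructor
  · rintro h φ ⟨b, hb, rfl⟩
    rw [skew_aux ω hω, h b hb, neg_zero]
  · intro h b hb
    rw [skew_aux ω hω]
    simpa using h (ω b) ⟨b, hb, rfl⟩

omit hω in
lemma dualCoann_inf [FiniteDimensional ℝ A] (Φ Ψ : Submodule ℝ (Module.Dual ℝ A)) :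
    (Φ ⊓ Ψ).dualCoannihilator = Φ.dualCoannihilator ⊔ Ψ.dualCoannihilator := by
  rw [← Submodule.comap_dualAnnihilator, ← Submodule.comap_dualAnnihilator,
    ← Submodule.comap_dualAnnihilator, Subspace.dualAnnihilator_inf_eq,
    ← Module.evalEquiv_toLinearMap, Submodule.comap_equiv_eq_map_symm,
    Submodule.comap_equiv_eq_map_symm, Submodule.comap_equiv_eq_map_symm,
    Submodule.map_sup]

lemma dualCoann_range : (LinearMap.range ω).dualCoannihilator = LinearMap.ker ω := by
  ext a
  simp only [Submodule.mem_dualCoannihilator, LinearMap.mem_ker]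
  constructor
  · intro h
    ext x
    rw [skew_aux ω hω]
    simpa using h (ω x) ⟨x, rfl⟩
  · rintro h φ ⟨x, rfl⟩
    rw [skew_aux ω hω, h]
    simp

lemma double_orth [FiniteDimensional ℝ A] (E : Submodule ℝ A) :
    omegaOrth ω (omegaOrth ω E) = E ⊔ LinearMap.ker ω := by
  rw [omegaOrth_eq_dualCoann ω hω, omegaOrth_eq_comap ω hω, Submodule.map_comap_eq,
    dualCoann_inf, dualCoann_range ω hω, Subspace.dualAnnihilator_dualCoannihilator_eq,
    sup_comm]

omit hω in
lemma omegaOrth_sup (E F : Submodule ℝ A) :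
    omegaOrth ω (E ⊔ F) = omegaOrth ω E ⊓ omegaOrth ω F := by
  ext a
  simp only [mem_omegaOrth_aux, Submodule.mem_inf]
  constructor
  · exact fun h => ⟨fun b hb => h b (Submodule.mem_sup_left hb),
      fun b hb => h b (Submodule.mem_sup_right hb)⟩
  · rintro ⟨h1, h2⟩ b hb
    obtain ⟨x, hx, y, hy, rfl⟩ := Submodule.mem_sup.mp hb
    rw [map_add, h1 x hx, h2 y hy, add_zero]

lemma omegaOrth_of_le_ker {E : Submodule ℝ A} (hE : E ≤ LinearMap.ker ω) :
    omegaOrth ω E = ⊤ := by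
  rw [eq_top_iff]
  intro a _
  rw [mem_omegaOrth_aux]
  intro b hb
  rw [skew_aux ω hω]
  have : ω b = 0 := hE hb
  simp [this]

omit hω in
lemma ker_le_omegaOrth {E : Submodule ℝ A} : LinearMap.ker ω ≤ omegaOrth ω E := by
  intro a ha
  rw [mem_omegaOrth_aux]
  intro b _
  rw [LinearMap.mem_ker] at ha
  simp [ha]

lemma dir [FiniteDimensional ℝ A] (B C : Submodule ℝ A)
    (h : omegaOrth ω B = C ⊔ (B ⊓ LinearMap.ker ω)) :
    omegaOrth ω C = B ⊔ (C ⊓ LinearMap.ker ω) := by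
  have hKC : LinearMap.ker ω ≤ B ⊔ (C ⊓ LinearMap.ker ω) := by
    intro k hk
    have hk1 : k ∈ omegaOrth ω B := ker_le_omegaOrth ω hk
    rw [h] at hk1
    obtain ⟨c, hc, x, hx, rfl⟩ := Submodule.mem_sup.mp hk1
    have hcK : c ∈ C ⊓ LinearMap.ker ω :=
      ⟨hc, by simpa using sub_mem hk hx.2⟩
    exact Submodule.mem_sup.mpr ⟨x, hx.1, c, hcK, by abel⟩
  have h2 : omegaOrth ω C = B ⊔ LinearMap.ker ω := by
    have := congrArg (omegaOrth ω) h
    rw [double_orth ω hω, omegaOrth_sup,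
      omegaOrth_of_le_ker ω hω inf_le_right, inf_top_eq] at this
    exact this.symm
  rw [h2]
  refine le_antisymm (sup_le le_sup_left hKC) (sup_le le_sup_left ?_)
  exact le_trans inf_le_right le_sup_right

end Aux

theorem stmt1 {A : Type*} [AddCommGroup A] [Module ℝ A] [FiniteDimensional ℝ A]
    (ω : A →ₗ[ℝ] A →ₗ[ℝ] ℝ) (hω : ∀ a, ω a a = 0) (B C : Submodule ℝ A) :
    omegaOrth ω B = C ⊔ (B ⊓ LinearMap.ker ω) ↔
      omegaOrth ω C = B ⊔ (C ⊓ LinearMap.ker ω) :=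
  ⟨dir ω hω B C, dir ω hω C B⟩
end

section
/- Let φ : A₀ → A₁ be a linear map of finite-dimensional real vector spaces and L₁ ⊆ A₁ ⊕ A₁* a Lagrangian subspace. Then the pullback φ^!(L₁) := {(u, φ*(ξ)) ∈ A₀ ⊕ A₀* | (φ(u), ξ) ∈ L₁} is a Lagrangian subspace of A₀ ⊕ A₀* with respect to the canonical pairing. -/
open Module LinearMap

lemma mem_orth_iff {A : Type*} [AddCommGroup A] [Module ℝ A]
    {E : Submodule ℝ (A × Module.Dual ℝ A)} {z : A × Module.Dual ℝ A} :
    z ∈ orth E ↔ ∀ e ∈ E, e.2 z.1 + z.2 e.1 = 0 := by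
  simp [orth, Submodule.mem_iInf, LinearMap.mem_ker, pairingP]

lemma mem_pullLag_iff {A₀ A₁ : Type*} [AddCommGroup A₀] [Module ℝ A₀]
    [AddCommGroup A₁] [Module ℝ A₁] (φ : A₀ →ₗ[ℝ] A₁)
    (L₁ : Submodule ℝ (A₁ × Module.Dual ℝ A₁)) (z : A₀ × Module.Dual ℝ A₀) :
    z ∈ pullLag φ L₁ ↔ ∃ ξ : Module.Dual ℝ A₁, (φ z.1, ξ) ∈ L₁ ∧ φ.dualMap ξ = z.2 := by
  constructor
  · rintro ⟨x, hx, rfl⟩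
    exact ⟨x.2, hx, rfl⟩
  · rintro ⟨ξ, hξ, hd⟩
    exact ⟨(z.1, ξ), hξ, by simp [tauMap, hd]⟩

theorem stmt6 {A₀ A₁ : Type*} [AddCommGroup A₀] [Module ℝ A₀] [FiniteDimensional ℝ A₀]
    [AddCommGroup A₁] [Module ℝ A₁] [FiniteDimensional ℝ A₁]
    (φ : A₀ →ₗ[ℝ] A₁) (L₁ : Submodule ℝ (A₁ × Module.Dual ℝ A₁))
    (hL₁ : IsLagrangian L₁) :
    IsLagrangian (pullLag φ L₁) := by
  have horthL : ∀ x y : A₁ × Module.Dual ℝ A₁, x ∈ L₁ → y ∈ L₁ → x.2 y.1 + y.2 x.1 = 0 := by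
    intro x y hx hy
    exact mem_orth_iff.mp (hL₁ ▸ hy) x hx
  -- the projection of L₁ to A₁
  set P₁ : Submodule ℝ A₁ := L₁.map (LinearMap.fst ℝ A₁ _) with hP₁
  have hK : ∀ η : Module.Dual ℝ A₁, (0, η) ∈ L₁ ↔ η ∈ P₁.dualAnnihilator := by
    intro η
    constructor
    · intro h
      rw [Submodule.mem_dualAnnihilator]
      rintro w ⟨e, he, rfl⟩
      have := horthL e (0, η) he h
      simpa using this
    · intro h
      rw [IsLagrangian] at hL₁
      rw [hL₁, mem_orth_iff]
      intro e he
      have := (Submodule.mem_dualAnnihilator η).mp h e.1 ⟨e, he, rfl⟩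
      simpa using this
  apply le_antisymm
  · -- pullLag ≤ orth pullLag
    intro z hz
    rw [mem_orth_iff]
    intro e he
    rw [mem_pullLag_iff] at hz he
    obtain ⟨ξ, hξ, hξd⟩ := hz
    obtain ⟨ζ, hζ, hζd⟩ := he
    have := horthL _ _ hζ hξ
    rw [← hξd, ← hζd]
    simpa [LinearMap.dualMap_apply] using this
  · -- orth pullLag ≤ pullLag
    rintro ⟨u, α⟩ hz
    rw [mem_orth_iff] at hz
    have h1 : ∀ (v : A₀) (ξ : Module.Dual ℝ A₁), (φ v, ξ) ∈ L₁ → ξ (φ u) + α v = 0 := by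
      intro v ξ h
      have := hz (v, φ.dualMap ξ) ((mem_pullLag_iff φ L₁ _).mpr ⟨ξ, h, rfl⟩)
      simpa using this
    -- Step A : φ u ∈ P₁
    have hA : φ u ∈ P₁ := by
      rw [← Subspace.forall_mem_dualAnnihilator_apply_eq_zero_iff]
      intro η hη
      have := h1 0 η (by simpa using (hK η).mpr hη)
      simpa using this
    obtain ⟨e₀, he₀, he₀1⟩ := hA
    obtain ⟨w₀, ξ₀⟩ := e₀
    have he₀1' : w₀ = φ u := he₀1
    subst he₀1'
    -- Step B : α - φ* ξ₀ vanishes on φ ⁻¹ P₁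
    set α' : Module.Dual ℝ A₀ := α - φ.dualMap ξ₀ with hα'
    have hB : ∀ v : A₀, φ v ∈ P₁ → α' v = 0 := by
      rintro v ⟨e, he, he1⟩
      obtain ⟨w, ξ⟩ := e
      have he1' : w = φ v := he1
      subst he1'
      have h2 := h1 v ξ he
      have h3 := horthL _ _ he₀ he
      simp only [hα', LinearMap.sub_apply, LinearMap.dualMap_apply]
      linarith
    -- Step C : α' = φ* ζ with ζ ∈ ann P₁
    have hkill : α' ∈ (LinearMap.ker φ).dualAnnihilator := by
      rw [Submodule.mem_dualAnnihilator]
      intro v hv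
      exact hB v (by rw [LinearMap.mem_ker.mp hv]; exact Submodule.zero_mem _)
    rw [← LinearMap.range_dualMap_eq_dualAnnihilator_ker] at hkill
    obtain ⟨β, hβ⟩ := hkill
    have hβann : β ∈ (P₁ ⊓ LinearMap.range φ).dualAnnihilator := by
      rw [Submodule.mem_dualAnnihilator]
      rintro w ⟨hw1, v, rfl⟩
      have : φ.dualMap β v = α' v := by rw [hβ]
      simpa [LinearMap.dualMap_apply, hB v hw1] using this
    rw [Subspace.dualAnnihilator_inf_eq, Submodule.mem_sup] at hβann
    obtain ⟨ζ, hζ, γ, hγ, hβeq⟩ := hβann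
    have hγ0 : φ.dualMap γ = 0 := by
      ext v
      exact (Submodule.mem_dualAnnihilator γ).mp hγ (φ v) ⟨v, rfl⟩
    have hζeq : φ.dualMap ζ = α' := by
      rw [← hβ, ← hβeq]; simp [hγ0]
    -- Step D : conclude
    rw [mem_pullLag_iff]
    refine ⟨ξ₀ + ζ, ?_, ?_⟩
    · have : ((φ u : A₁), ξ₀ + ζ) = (φ u, ξ₀) + (0, ζ) := by simp
      rw [this]
      exact Submodule.add_mem _ he₀ ((hK ζ).mpr hζ)
    · simp only [map_add, hζeq, hα']
      abel
end

section
/- Let φ : A₀ → A₁ be a surjective linear map of finite-dimensional real vector spaces and L₁ ⊆ A₁ ⊕ A₁* a Lagrangian subspace. Then φ_!(φ^!(L₁)) = L₁. -/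
open Module LinearMap

theorem stmt8 {A₀ A₁ : Type*} [AddCommGroup A₀] [Module ℝ A₀] [FiniteDimensional ℝ A₀]
    [AddCommGroup A₁] [Module ℝ A₁] [FiniteDimensional ℝ A₁]
    (φ : A₀ →ₗ[ℝ] A₁) (hφ : Function.Surjective φ)
    (L₁ : Submodule ℝ (A₁ × Module.Dual ℝ A₁)) (hL₁ : IsLagrangian L₁) :
    pushLag φ (pullLag φ L₁) = L₁ := by
  have hτ : Function.Injective (tauMap φ) := by
    have hd : Function.Injective φ.dualMap := by
      intro ξ η h
      ext v
      obtain ⟨u, rfl⟩ := hφ v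
      exact congrFun (congrArg DFunLike.coe h) u
    intro x y h
    have h1 := congrArg Prod.fst h
    have h2 := congrArg Prod.snd h
    simp [tauMap] at h1 h2
    exact Prod.ext h1 (hd h2)
  have hσ : Function.Surjective (sigMap φ) := by
    rintro ⟨v, ξ⟩
    obtain ⟨u, rfl⟩ := hφ v
    exact ⟨(u, ξ), rfl⟩
  unfold pushLag pullLag
  rw [Submodule.comap_map_eq_of_injective hτ, Submodule.map_comap_eq_of_surjective hσ]
end

section
/- Let φ : A₀ → A₁ be a surjective linear map with kernel V ⊆ A₀, and let L ⊆ A₀ ⊕ A₀* be a Lagrangian subspace. Then φ^!(φ_!(L)) = (L ∩ V^⊥) + V, where V is identified with V ⊕ 0 ⊆ A₀ ⊕ A₀* and V^⊥ is the orthogonal with respect to the canonical pairing. -/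
open Module LinearMap

/-
Unwinding φ-relatedness, `(u, ζ)` lies in `φ^! φ_! L` exactly when `ζ = φ*ξ` for some `ξ ∈ A₁*`
and `u` differs by an element of `V = ker φ` from some `w` with `(w, φ*ξ) ∈ L`. On the other
side, `(L ∩ V^⊥) + V` consists of the `(w + v, η)` with `(w, η) ∈ L`, `η ∈ ann V` and `v ∈ V`.
The two descriptions agree because `ann (ker φ) = range φ*`.
-/

section

variable {A : Type*} [AddCommGroup A] [Module ℝ A]

theorem mem_orth_map_inlA_iff (W : Submodule ℝ A) (z : A × Dual ℝ A) :
    z ∈ orth (W.map (inlA A)) ↔ z.2 ∈ W.dualAnnihilator := by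
  simp only [orth, Submodule.mem_iInf, mem_ker, Submodule.mem_map,
    Submodule.mem_dualAnnihilator]
  constructor
  · intro h v hv
    simpa [pairingP, inlA] using h (inlA A v) ⟨v, hv, rfl⟩
  · rintro h _ ⟨v, hv, rfl⟩
    simpa [pairingP, inlA] using h v hv

theorem mem_sup_map_inlA_iff (E : Submodule ℝ (A × Dual ℝ A)) (W : Submodule ℝ A)
    (u : A) (ζ : Dual ℝ A) :
    (u, ζ) ∈ E ⊔ W.map (inlA A) ↔ ∃ w, (w, ζ) ∈ E ∧ u - w ∈ W := by
  rw [Submodule.mem_sup]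
  constructor
  · rintro ⟨⟨w, η⟩, hE, _, ⟨v, hv, rfl⟩, hsum⟩
    simp only [inlA, inl_apply, Prod.mk_add_mk, add_zero, Prod.mk.injEq] at hsum
    obtain ⟨rfl, rfl⟩ := hsum
    exact ⟨w, hE, by simpa using hv⟩
  · rintro ⟨w, hE, hW⟩
    exact ⟨(w, ζ), hE, inlA A (u - w), ⟨u - w, hW, rfl⟩, by simp [inlA]⟩

end

theorem mem_pullLag_pushLag_iff {A₀ A₁ : Type*} [AddCommGroup A₀] [Module ℝ A₀]
    [AddCommGroup A₁] [Module ℝ A₁] (φ : A₀ →ₗ[ℝ] A₁)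
    (L : Submodule ℝ (A₀ × Dual ℝ A₀)) (u : A₀) (ζ : Dual ℝ A₀) :
    (u, ζ) ∈ pullLag φ (pushLag φ L) ↔
      ∃ w, ∃ ξ : Dual ℝ A₁, (w, φ.dualMap ξ) ∈ L ∧ u - w ∈ ker φ ∧ φ.dualMap ξ = ζ := by
  constructor
  · rintro ⟨⟨u', ξ⟩, ⟨⟨w, ξ'⟩, hL, hsig⟩, htau⟩
    simp only [sigMap, tauMap, prod_apply, Function.prod, coe_comp, Function.comp_apply, fst_apply,
      snd_apply, Prod.mk.injEq] at hsig htau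
    obtain ⟨hφw, rfl⟩ := hsig
    obtain ⟨rfl, rfl⟩ := htau
    exact ⟨w, ξ', hL, by simp [hφw], rfl⟩
  · rintro ⟨w, ξ, hL, hker, rfl⟩
    rw [mem_ker, map_sub, sub_eq_zero] at hker
    exact ⟨(u, ξ), ⟨(w, ξ), hL, by simp [sigMap, hker]⟩, by simp [tauMap]⟩

theorem stmt9_general {A₀ A₁ : Type*} [AddCommGroup A₀] [Module ℝ A₀]
    [AddCommGroup A₁] [Module ℝ A₁]
    (φ : A₀ →ₗ[ℝ] A₁)
    (L : Submodule ℝ (A₀ × Module.Dual ℝ A₀)) :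
    pullLag φ (pushLag φ L)
      = (L ⊓ orth (Submodule.map (inlA A₀) (LinearMap.ker φ)))
        ⊔ Submodule.map (inlA A₀) (LinearMap.ker φ) := by
  ext ⟨u, ζ⟩
  simp only [mem_pullLag_pushLag_iff, mem_sup_map_inlA_iff, Submodule.mem_inf,
    mem_orth_map_inlA_iff, ← range_dualMap_eq_dualAnnihilator_ker, mem_range]
  constructor
  · rintro ⟨w, ξ, hL, hker, rfl⟩
    exact ⟨w, ⟨hL, ξ, rfl⟩, hker⟩
  · rintro ⟨w, ⟨hL, ξ, rfl⟩, hker⟩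
    exact ⟨w, ξ, hL, hker, rfl⟩

theorem stmt9 {A₀ A₁ : Type*} [AddCommGroup A₀] [Module ℝ A₀] [FiniteDimensional ℝ A₀]
    [AddCommGroup A₁] [Module ℝ A₁] [FiniteDimensional ℝ A₁]
    (φ : A₀ →ₗ[ℝ] A₁) (hφ : Function.Surjective φ)
    (L : Submodule ℝ (A₀ × Module.Dual ℝ A₀)) (hL : IsLagrangian L) :
    pullLag φ (pushLag φ L)
      = (L ⊓ orth (Submodule.map (inlA A₀) (LinearMap.ker φ)))
        ⊔ Submodule.map (inlA A₀) (LinearMap.ker φ) :=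
  stmt9_general φ L
end

section
/- Let A be a finite-dimensional real vector space, ω a 2-form on A with kernel K, and B, C ⊆ A subspaces. Define R_ω(C) := {(c, ι_c ω) | c ∈ C} ⊆ A ⊕ A* and view B as B ⊕ 0. Then the following are equivalent: (a) ω(B,C) = 0 and dim(B ∩ K ∩ C) = dim B + dim C − dim A; (b) B + R_ω(C) is a Lagrangian subspace of A ⊕ A* with respect to the canonical pairing. -/
open Module LinearMap

/-!
The pairing on `A × A*` is nondegenerate of dimension `2 dim A`, so a subspace is Lagrangian
exactly when it is isotropic and has dimension `dim A`. For `E = B ⊕ 0 + R_ω(C)`, isotropy is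
`ω(B, C) = 0` because `ω` is alternating, and `B ⊕ 0` meets `R_ω(C)` in `(B ∩ K ∩ C) ⊕ 0`, so
`dim E = dim B + dim C - dim (B ∩ K ∩ C)`.
-/

open Submodule

section Pairing

variable {A : Type*} [AddCommGroup A] [Module ℝ A]

lemma pairingP_apply (x y : A × Dual ℝ A) : pairingP A x y = x.2 y.1 + y.2 x.1 := rfl

lemma orth_eq_orthogonal (E : Submodule ℝ (A × Dual ℝ A)) :
    orth E = BilinForm.orthogonal (pairingP A) E := by
  ext x
  simp [orth, BilinForm.mem_orthogonal_iff]

lemma ker_pairingP : ker (pairingP A) = ⊥ := by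
  refine separatingLeft_iff_ker_eq_bot.1 fun x hx => ?_
  have h2 : x.2 = 0 := by
    ext v
    simpa [pairingP_apply] using hx (v, 0)
  have h1 : x.1 = 0 := by
    refine (forall_dual_apply_eq_zero_iff ℝ x.1).1 fun φ => ?_
    simpa [pairingP_apply, h2] using hx (0, φ)
  exact Prod.ext h1 h2

variable [FiniteDimensional ℝ A]

lemma finrank_add_finrank_orth (E : Submodule ℝ (A × Dual ℝ A)) :
    finrank ℝ E + finrank ℝ (orth E) = 2 * finrank ℝ A := by
  have h := BilinForm.finrank_add_finrank_orthogonal' (B := pairingP A) E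
  rw [ker_pairingP, inf_bot_eq, finrank_bot, add_zero] at h
  rw [orth_eq_orthogonal, h, finrank_prod, Subspace.dual_finrank_eq, two_mul]

lemma isLagrangian_iff_le_orth_and_finrank_eq (E : Submodule ℝ (A × Dual ℝ A)) :
    IsLagrangian E ↔ E ≤ orth E ∧ finrank ℝ E = finrank ℝ A := by
  have hdim := finrank_add_finrank_orth E
  constructor
  · intro hE
    refine ⟨hE.le, ?_⟩
    rw [← hE] at hdim
    omega
  · rintro ⟨hle, hfin⟩
    exact eq_of_le_of_finrank_le hle (by omega)

end Pairing

section Graph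

variable {A : Type*} [AddCommGroup A] [Module ℝ A] (ω : A →ₗ[ℝ] A →ₗ[ℝ] ℝ) (B C : Submodule ℝ A)

lemma mem_map_inlA_sup_map_grForm {x : A × Dual ℝ A} :
    x ∈ map (inlA A) B ⊔ map (grForm ω) C ↔ ∃ b ∈ B, ∃ c ∈ C, x = (b + c, ω c) := by
  rw [mem_sup]
  constructor
  · rintro ⟨_, ⟨b, hb, rfl⟩, _, ⟨c, hc, rfl⟩, rfl⟩
    exact ⟨b, hb, c, hc, by simp [inlA, grForm]⟩
  · rintro ⟨b, hb, c, hc, rfl⟩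
    exact ⟨(b, 0), ⟨b, hb, rfl⟩, (c, ω c), ⟨c, hc, rfl⟩, by simp⟩

lemma mem_orth_map_inlA_sup_map_grForm {x : A × Dual ℝ A} :
    x ∈ orth (map (inlA A) B ⊔ map (grForm ω) C) ↔
      (∀ b ∈ B, x.2 b = 0) ∧ ∀ c ∈ C, ω c x.1 + x.2 c = 0 := by
  simp only [orth, mem_iInf, mem_ker, mem_map_inlA_sup_map_grForm]
  constructor
  · intro hx
    refine ⟨fun b hb => ?_, fun c hc => ?_⟩
    · simpa [pairingP_apply] using hx (b, 0) ⟨b, hb, 0, C.zero_mem, by simp⟩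
    · simpa [pairingP_apply] using hx (c, ω c) ⟨0, B.zero_mem, c, hc, by simp⟩
  · rintro ⟨hB, hC⟩ _ ⟨b, hb, c, hc, rfl⟩
    simp only [pairingP_apply, map_add, hB b hb, zero_add]
    exact hC c hc

lemma map_inlA_sup_map_grForm_le_orth_iff (hω : ω.IsAlt) :
    map (inlA A) B ⊔ map (grForm ω) C ≤ orth (map (inlA A) B ⊔ map (grForm ω) C) ↔
      ∀ b ∈ B, ∀ c ∈ C, ω b c = 0 := by
  constructor
  · intro hle b hb c hc
    have hc' : (c, ω c) ∈ orth (map (inlA A) B ⊔ map (grForm ω) C) :=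
      hle ((mem_map_inlA_sup_map_grForm ω B C).2 ⟨0, B.zero_mem, c, hc, by simp⟩)
    exact hω.eq_iff.1 (((mem_orth_map_inlA_sup_map_grForm ω B C).1 hc').1 b hb)
  · rintro h _ hx
    obtain ⟨b, hb, c, hc, rfl⟩ := (mem_map_inlA_sup_map_grForm ω B C).1 hx
    refine (mem_orth_map_inlA_sup_map_grForm ω B C).2 ⟨fun b' hb' => ?_, fun c' hc' => ?_⟩
    · exact hω.eq_iff.1 (h b' hb' c hc)
    · simp only [map_add, hω.eq_iff.1 (h b hb c' hc'), ← hω.neg c c',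
        zero_add, neg_add_cancel]

lemma map_inlA_inf_map_grForm :
    map (inlA A) B ⊓ map (grForm ω) C = map (inlA A) (B ⊓ ker ω ⊓ C) := by
  ext x
  constructor
  · rintro ⟨⟨b, hb, rfl⟩, c, hc, hcb⟩
    obtain ⟨rfl, hωc⟩ := Prod.ext_iff.1 hcb
    exact ⟨c, ⟨⟨hb, hωc⟩, hc⟩, rfl⟩
  · rintro ⟨b, ⟨⟨hb, hωb⟩, hc⟩, rfl⟩
    exact ⟨⟨b, hb, rfl⟩, b, hc, Prod.ext rfl (mem_ker.1 hωb)⟩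

lemma finrank_map_inlA_sup_map_grForm [FiniteDimensional ℝ A] :
    finrank ℝ ↥(map (inlA A) B ⊔ map (grForm ω) C) + finrank ℝ ↥(B ⊓ ker ω ⊓ C)
      = finrank ℝ B + finrank ℝ C := by
  have hinl : Function.Injective (inlA A) := LinearMap.inl_injective
  have hgr : Function.Injective (grForm ω) := fun _ _ h => congrArg Prod.fst h
  have h := finrank_sup_add_finrank_inf_eq (map (inlA A) B) (map (grForm ω) C)
  rwa [map_inlA_inf_map_grForm, ← (equivMapOfInjective _ hinl B).finrank_eq,
    ← (equivMapOfInjective _ hgr C).finrank_eq, ← (equivMapOfInjective _ hinl _).finrank_eq] at h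

end Graph

theorem stmt10 {A : Type*} [AddCommGroup A] [Module ℝ A] [FiniteDimensional ℝ A]
    (ω : A →ₗ[ℝ] A →ₗ[ℝ] ℝ) (hω : ∀ a, ω a a = 0) (B C : Submodule ℝ A) :
    ((∀ b ∈ B, ∀ c ∈ C, ω b c = 0) ∧
      Module.finrank ℝ ↥(B ⊓ LinearMap.ker ω ⊓ C) + Module.finrank ℝ A
        = Module.finrank ℝ B + Module.finrank ℝ C) ↔
    IsLagrangian (Submodule.map (inlA A) B ⊔ Submodule.map (grForm ω) C) := by
  rw [isLagrangian_iff_le_orth_and_finrank_eq, map_inlA_sup_map_grForm_le_orth_iff ω B C hω]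
  have hdim := finrank_map_inlA_sup_map_grForm ω B C
  exact and_congr_right' (by omega)
end

section
/- Let A be a finite-dimensional real vector space, ω a 2-form on A with kernel K, and B, C ⊆ A subspaces satisfying ω(B,C) = 0, B ∩ K ∩ C = 0, and dim A = dim B + dim C. Then B^ω = C ⊕ (B ∩ K) (the sum is direct and equals B^ω). -/
open Module LinearMap

theorem stmt11 {A : Type*} [AddCommGroup A] [Module ℝ A] [FiniteDimensional ℝ A]
    (ω : A →ₗ[ℝ] A →ₗ[ℝ] ℝ) (hω : ∀ a, ω a a = 0) (B C : Submodule ℝ A)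
    (hBC : ∀ b ∈ B, ∀ c ∈ C, ω b c = 0)
    (h0 : B ⊓ LinearMap.ker ω ⊓ C = ⊥)
    (hdim : Module.finrank ℝ A = Module.finrank ℝ B + Module.finrank ℝ C) :
    omegaOrth ω B = C ⊔ (B ⊓ LinearMap.ker ω) ∧ C ⊓ (B ⊓ LinearMap.ker ω) = ⊥ := by
  have skew : ∀ x y, ω x y = - ω y x := by
    intro x y
    have h := hω (x + y)
    simp only [map_add, LinearMap.add_apply, hω] at h
    linarith
  -- membership in omegaOrth
  have hmem : ∀ x, x ∈ omegaOrth ω B ↔ ∀ b ∈ B, ω x b = 0 := by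
    intro x
    simp [omegaOrth, Submodule.mem_iInf, LinearMap.mem_ker]
  -- second conjunct
  have hdisj : C ⊓ (B ⊓ LinearMap.ker ω) = ⊥ := by
    rw [inf_comm]
    exact h0
  refine ⟨?_, hdisj⟩
  -- sup ≤ orth
  have hCle : C ≤ omegaOrth ω B := by
    intro c hc
    rw [hmem]
    intro b hb
    rw [skew]
    simp [hBC b hb c hc]
  have hBKle : B ⊓ LinearMap.ker ω ≤ omegaOrth ω B := by
    intro x hx
    rw [hmem]
    intro b hb
    have : ω x = 0 := hx.2
    simp [this]
  have hle : C ⊔ (B ⊓ LinearMap.ker ω) ≤ omegaOrth ω B := sup_le hCle hBKle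
  -- ker ω.flip = ker ω
  have hker : LinearMap.ker ω.flip = LinearMap.ker ω := by
    ext x
    simp only [LinearMap.mem_ker]
    constructor
    · intro h
      ext y
      have : ω.flip x y = 0 := by rw [h]; rfl
      simp only [LinearMap.flip_apply] at this
      rw [skew] at this
      simpa using this
    · intro h
      ext y
      simp [LinearMap.flip_apply, skew y x, show ω x = 0 from h]
  -- orth as dualCoannihilator
  have horth : omegaOrth ω B = (Submodule.map ω.flip B).dualCoannihilator := by
    ext x
    rw [hmem, Submodule.mem_dualCoannihilator]
    constructor
    · rintro h φ ⟨b, hb, rfl⟩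
      exact h b hb
    · intro h b hb
      exact h (ω.flip b) ⟨b, hb, rfl⟩
  -- rank-nullity for ω.flip restricted to B
  have hrn : finrank ℝ (Submodule.map ω.flip B) + finrank ℝ (B ⊓ LinearMap.ker ω : Submodule ℝ A)
      = finrank ℝ B := by
    have h1 := LinearMap.finrank_range_add_finrank_ker (ω.flip.domRestrict B)
    rw [LinearMap.range_domRestrict, LinearMap.ker_domRestrict] at h1
    have h2 : finrank ℝ (Submodule.comap B.subtype (LinearMap.ker ω.flip))
        = finrank ℝ (B ⊓ LinearMap.ker ω : Submodule ℝ A) := by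
      rw [← hker]
      have e : Submodule.comap B.subtype (LinearMap.ker ω.flip)
          = Submodule.comap B.subtype (B ⊓ LinearMap.ker ω.flip) := by
        rw [Submodule.comap_inf]
        simp [Submodule.comap_subtype_self]
      rw [e]
      exact (Submodule.comapSubtypeEquivOfLe inf_le_left).finrank_eq
    rw [h2] at h1
    exact h1
  -- dimension of coannihilator
  have hco := Subspace.finrank_add_finrank_dualCoannihilator_eq (Submodule.map ω.flip B)
  -- dimension of sup
  have hsup : finrank ℝ (C ⊔ (B ⊓ LinearMap.ker ω) : Submodule ℝ A)
      = finrank ℝ C + finrank ℝ (B ⊓ LinearMap.ker ω : Submodule ℝ A) := by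
    have := Submodule.finrank_sup_add_finrank_inf_eq C (B ⊓ LinearMap.ker ω)
    rw [hdisj] at this
    simpa using this
  have hrankeq : finrank ℝ (omegaOrth ω B) = finrank ℝ (C ⊔ (B ⊓ LinearMap.ker ω) : Submodule ℝ A) := by
    rw [horth]
    linarith [hco, hrn, hdim, hsup]

  exact (Submodule.eq_of_le_of_finrank_eq hle hrankeq.symm).symm
end

section
/- Let A be a finite-dimensional real vector space, ω a 2-form with kernel K, and B, C ⊆ A with ω(B,C) = 0. Then dim(B + R_ω(C)) = dim B + dim C − dim(B ∩ K ∩ C), where R_ω(C) = {(c, ι_c ω) | c ∈ C} ⊆ A ⊕ A* and B is viewed as B ⊕ 0 ⊆ A ⊕ A*. -/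
open Module LinearMap

theorem stmt12 {A : Type*} [AddCommGroup A] [Module ℝ A] [FiniteDimensional ℝ A]
    (ω : A →ₗ[ℝ] A →ₗ[ℝ] ℝ) (hω : ∀ a, ω a a = 0) (B C : Submodule ℝ A)
    (hBC : ∀ b ∈ B, ∀ c ∈ C, ω b c = 0) :
    Module.finrank ℝ ↥(Submodule.map (inlA A) B ⊔ Submodule.map (grForm ω) C)
      + Module.finrank ℝ ↥(B ⊓ LinearMap.ker ω ⊓ C)
      = Module.finrank ℝ B + Module.finrank ℝ C := by
  have hinl : Function.Injective (inlA A) := LinearMap.inl_injective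
  have hgr : Function.Injective (grForm ω) := by
    intro x y h
    simpa [grForm] using congrArg Prod.fst h
  have hinf : Submodule.map (inlA A) B ⊓ Submodule.map (grForm ω) C
      = Submodule.map (inlA A) (B ⊓ LinearMap.ker ω ⊓ C) := by
    ext x
    simp only [Submodule.mem_inf, Submodule.mem_map, LinearMap.mem_ker]
    constructor
    · rintro ⟨⟨b, hb, rfl⟩, c, hc, hce⟩
      have h1 : c = b := congrArg Prod.fst hce
      subst h1
      have h2 : ω c = 0 := by simpa [grForm, inlA] using congrArg Prod.snd hce
      exact ⟨c, ⟨⟨hb, h2⟩, hc⟩, rfl⟩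
    · rintro ⟨b, ⟨⟨hb, hk⟩, hc⟩, rfl⟩
      refine ⟨⟨b, hb, rfl⟩, b, hc, ?_⟩
      simp [grForm, inlA, hk]
  have key := Submodule.finrank_sup_add_finrank_inf_eq
    (Submodule.map (inlA A) B) (Submodule.map (grForm ω) C)
  rw [hinf] at key
  have e1 : ∀ p : Submodule ℝ A,
      Module.finrank ℝ (Submodule.map (inlA A) p) = Module.finrank ℝ p :=
    fun p => ((Submodule.equivMapOfInjective _ hinl p).finrank_eq).symm
  have e2 : Module.finrank ℝ (Submodule.map (grForm ω) C) = Module.finrank ℝ C :=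
    ((Submodule.equivMapOfInjective _ hgr C).finrank_eq).symm
  rw [e1, e1, e2] at key
  exact key
end

section
/- Let A be a finite-dimensional real vector space, B, C ⊆ A subspaces, and ω a 2-form on A with kernel K. If B^ω = C + (B ∩ K), then ω(B,C) = 0 and dim(B ∩ K ∩ C) = dim B + dim C − dim A. -/
open Module LinearMap

theorem stmt13 {A : Type*} [AddCommGroup A] [Module ℝ A] [FiniteDimensional ℝ A]
    (ω : A →ₗ[ℝ] A →ₗ[ℝ] ℝ) (hω : ∀ a, ω a a = 0) (B C : Submodule ℝ A)
    (h : omegaOrth ω B = C ⊔ (B ⊓ LinearMap.ker ω)) :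
    (∀ b ∈ B, ∀ c ∈ C, ω b c = 0) ∧
      Module.finrank ℝ ↥(B ⊓ LinearMap.ker ω ⊓ C) + Module.finrank ℝ A
        = Module.finrank ℝ B + Module.finrank ℝ C := by
  -- skew symmetry
  have skew : ∀ a b, ω a b = - ω b a := by
    intro a b
    have h2 := hω (a + b)
    simp only [map_add, LinearMap.add_apply, hω] at h2
    linarith
  have hflipker : LinearMap.ker ω.flip = LinearMap.ker ω := by
    ext a
    simp only [LinearMap.mem_ker]
    constructor
    · intro ha
      ext b
      have hb : ω.flip a b = 0 := by rw [ha]; rfl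
      rw [LinearMap.flip_apply] at hb
      have := skew a b
      rw [skew b a] at hb
      simp only [LinearMap.zero_apply]
      linarith [skew a b, hb]
    · intro ha
      ext b
      have hb : ω a b = 0 := by rw [ha]; rfl
      rw [LinearMap.flip_apply, skew b a, hb]
      simp
  have memOrth : ∀ a, a ∈ omegaOrth ω B ↔ ∀ b ∈ B, ω a b = 0 := by
    intro a
    simp [omegaOrth, Submodule.mem_iInf, LinearMap.mem_ker, LinearMap.flip_apply]
  have hCsub : C ≤ omegaOrth ω B := by rw [h]; exact le_sup_left
  have part1 : ∀ b ∈ B, ∀ c ∈ C, ω b c = 0 := by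
    intro b hb c hc
    have hc0 := (memOrth c).1 (hCsub hc) b hb
    rw [skew, hc0, neg_zero]
  refine ⟨part1, ?_⟩
  set K := LinearMap.ker ω with hK
  set g : B →ₗ[ℝ] Module.Dual ℝ A := ω.flip ∘ₗ B.subtype with hg
  set f : A →ₗ[ℝ] Module.Dual ℝ B :=
    g.dualMap ∘ₗ (Module.evalEquiv ℝ A : A →ₗ[ℝ] Module.Dual ℝ (Module.Dual ℝ A)) with hf
  have hfa : ∀ (a : A) (b : B), f a b = ω a (b : A) := by
    intro a b
    simp [hf, hg, Module.evalEquiv_toLinearMap]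
  have hkerf : LinearMap.ker f = omegaOrth ω B := by
    ext a
    rw [memOrth, LinearMap.mem_ker]
    constructor
    · intro ha b hb
      have := hfa a ⟨b, hb⟩
      rw [ha] at this
      simpa using this.symm
    · intro ha
      ext b
      rw [hfa]
      exact ha b b.2
  have hrangef : LinearMap.range f = LinearMap.range g.dualMap := by
    rw [hf, LinearMap.range_comp, LinearEquiv.range, Submodule.map_top]
  have hrkf : Module.finrank ℝ (LinearMap.range f) = Module.finrank ℝ (LinearMap.range g) := by
    rw [hrangef]
    exact LinearMap.finrank_range_dualMap_eq_finrank_range g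
  have hkerg : LinearMap.ker g = Submodule.comap B.subtype K := by
    rw [hg, LinearMap.ker_comp, hflipker]
  have hrkkerg : Module.finrank ℝ (LinearMap.ker g) = Module.finrank ℝ ↥(B ⊓ K) := by
    rw [hkerg]
    have heq := (Submodule.equivMapOfInjective B.subtype B.injective_subtype
      (Submodule.comap B.subtype K)).finrank_eq
    rw [heq, Submodule.map_comap_subtype]
  have rn1 : Module.finrank ℝ (LinearMap.range f) + Module.finrank ℝ (LinearMap.ker f)
      = Module.finrank ℝ A := LinearMap.finrank_range_add_finrank_ker f
  have rn2 : Module.finrank ℝ (LinearMap.range g) + Module.finrank ℝ (LinearMap.ker g)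
      = Module.finrank ℝ B := LinearMap.finrank_range_add_finrank_ker g
  have hsup : Module.finrank ℝ ↥(C ⊔ (B ⊓ K)) + Module.finrank ℝ ↥(C ⊓ (B ⊓ K))
      = Module.finrank ℝ C + Module.finrank ℝ ↥(B ⊓ K) :=
    Submodule.finrank_sup_add_finrank_inf_eq C (B ⊓ K)
  have horth : Module.finrank ℝ (omegaOrth ω B) = Module.finrank ℝ ↥(C ⊔ (B ⊓ K)) := by rw [h]
  have hcomm : (B ⊓ K ⊓ C : Submodule ℝ A) = C ⊓ (B ⊓ K) := by rw [inf_comm]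
  rw [hcomm]
  rw [hkerf, horth] at rn1
  omega
end
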